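/- arXiv:2302.00969 — 2 statements merged into one kernel-verified Lean document; each statement's English description precedes it below -/
import Mathlib

section
/- The T-strong dual Ê of E = L^2(T) is strongly complete: every net (𝔣_α) in Ê such that v_α := sup_{β,γ ≥ α} ‖𝔣_β − 𝔣_γ‖ is eventually defined in R(T) and v_α ↓ 0 converges strongly to some 𝔣 ∈ Ê, i.e., sup_{β ≥ α} ‖𝔣_β − 𝔣‖ is eventually defined and order converges to 0. -/
/-!
Common setup.  `E` models the universal completion `E_u` of the `T`-universally
complete Riesz space `L¹(T)`: a Dedekind complete (conditionally complete)
`f`-algebra whose multiplicative unit `1 = e = Te` is a weak order unit.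
`T : E → E` models the strictly positive conditional expectation operator,
`L1 ⊆ E` its natural domain `L¹(T)`, `L2 L1` the space `L²(T)` and `RT T` the
range `R(T)` of `T`.
-/

variable {E : Type*}

/-- The range `R(T)` of the conditional expectation operator. -/
def RT (T : E → E) : Set E := Set.range T

/-- `L²(T) = {f ∈ L¹(T) : f² ∈ L¹(T)}`, the product taken in the `f`-algebra `E_u`. -/
def L2 [Mul E] (L1 : Set E) : Set E := {f | f ∈ L1 ∧ f * f ∈ L1}

variable [CommRing E] [ConditionallyCompleteLattice E]

/-- `T` is a strictly positive conditional expectation operator on the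
`T`-universally complete space `L¹(T)` (modelled by the set `L1` inside the
Dedekind complete `f`-algebra `E`), with `1 = e = Te` a weak order unit. -/
structure IsCondExp (T : E → E) (L1 : Set E) : Prop where
  /-- compatibility of the order with addition -/
  addLe : ∀ a b c : E, a ≤ b → a + c ≤ b + c
  /-- products of positive elements are positive -/
  mulPos : ∀ a b : E, 0 ≤ a → 0 ≤ b → 0 ≤ a * b
  /-- the `f`-algebra property -/
  fAlg : ∀ a b c : E, a ⊓ b = 0 → 0 ≤ c → (c * a) ⊓ b = 0
  /-- `1 = e` is a weak order unit -/
  weakUnit : ∀ x : E, 0 ≤ x → x ⊓ 1 = 0 → x = 0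
  /-- `T` is additive -/
  addT : ∀ a b : E, T (a + b) = T a + T b
  /-- `T` is positive -/
  posT : ∀ a : E, 0 ≤ a → 0 ≤ T a
  /-- `T` is strictly positive -/
  strictT : ∀ a : E, 0 ≤ a → T a = 0 → a = 0
  /-- `T` is a projection -/
  projT : ∀ a : E, T (T a) = T a
  /-- `T` maps the weak order unit `e = 1` to itself -/
  unitT : T 1 = 1
  /-- `T` is an averaging operator: `T(T a · b) = T a · T b` -/
  avgT : ∀ a b : E, T (T a * b) = T a * T b
  /-- `T` is order continuous -/
  ordContT : ∀ S : Set E, S.Nonempty → DirectedOn (· ≥ ·) S → (∀ x ∈ S, 0 ≤ x) →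
      IsGLB S 0 → IsGLB (T '' S) 0
  /-- `L¹(T)` is closed under addition -/
  l1add : ∀ a ∈ L1, ∀ b ∈ L1, a + b ∈ L1
  /-- `L¹(T)` is solid -/
  l1sol : ∀ a ∈ L1, ∀ b : E, |b| ≤ |a| → b ∈ L1
  /-- `R(T) ⊆ L¹(T)` and `T` maps `L¹(T)` into itself -/
  rtL1 : ∀ a : E, T a ∈ L1
  /-- `L²(T)` is an `R(T)`-module -/
  l2mod : ∀ α ∈ RT T, ∀ x ∈ L2 L1, α * x ∈ L2 L1
  /-- `T`-universal completeness of `L¹(T)` -/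
  tuc : ∀ S : Set E, S.Nonempty → (∀ x ∈ S, 0 ≤ x ∧ x ∈ L1) → DirectedOn (· ≤ ·) S →
      BddAbove (T '' S) → BddAbove S ∧ sSup S ∈ L1

/-- `sqrt` is a square-root function on the positive cone of the `f`-algebra. -/
def IsSqrt (sqrt : E → E) : Prop := ∀ a : E, 0 ≤ a → 0 ≤ sqrt a ∧ sqrt a * sqrt a = a

/-- The `R(T)`-valued norm `‖f‖_{T,2} = (T (f²))^{1/2}` on `L²(T)`. -/
def nrm (T : E → E) (sqrt : E → E) (f : E) : E := sqrt (T (f * f))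

/-- A `T`-linear functional on `E = L²(T)`: `R(T)`-valued, additive,
`R(T)`-homogeneous and order bounded.  The set of these is the `T`-dual `E*`. -/
def TLinear (T : E → E) (L1 : Set E) (F : E → E) : Prop :=
  (∀ x ∈ L2 L1, F x ∈ RT T) ∧
  (∀ x ∈ L2 L1, ∀ y ∈ L2 L1, F (x + y) = F x + F y) ∧
  (∀ α ∈ RT T, ∀ x ∈ L2 L1, F (α * x) = α * F x) ∧
  (∀ x ∈ L2 L1, 0 ≤ x → ∃ b : E, ∀ y ∈ L2 L1, |y| ≤ x → |F y| ≤ b)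

/-- `T`-strong boundedness: `|F x| ≤ k ‖x‖_{T,2}` for some `k ∈ R(T)₊`. -/
def StronglyBdd (T : E → E) (L1 : Set E) (sqrt : E → E) (F : E → E) : Prop :=
  ∃ k ∈ RT T, 0 ≤ k ∧ ∀ x ∈ L2 L1, |F x| ≤ k * nrm T sqrt x

/-- Membership in the `T`-strong dual `Ê` of `L²(T)`. -/
def MemEhat (T : E → E) (L1 : Set E) (sqrt : E → E) (F : E → E) : Prop :=
  TLinear T L1 F ∧ StronglyBdd T L1 sqrt F

/-- The Riesz representation map `Ψ(f)(g) = T (f g)`. -/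
def Psi (T : E → E) (f : E) : E → E := fun g => T (f * g)

/-- The Riesz–Kantorovich set `{F y + G z : y, z ∈ L²(T)₊, y + z = x}` whose
supremum is `(F ∨ G)(x)` and whose infimum is `(F ∧ G)(x)`. -/
def RKset (L1 : Set E) (F G : E → E) (x : E) : Set E :=
  {v | ∃ y z : E, y ∈ L2 L1 ∧ z ∈ L2 L1 ∧ 0 ≤ y ∧ 0 ≤ z ∧ y + z = x ∧ v = F y + G z}

/-- The partial order on functionals: `F ≤ G` iff `F x ≤ G x` for all `x ∈ L²(T)₊`. -/
def leF [Mul E] (L1 : Set E) (F G : E → E) : Prop := ∀ x ∈ L2 L1, 0 ≤ x → F x ≤ G x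

section Stmt15Aux

namespace IsCondExp

variable {E : Type*} [CommRing E] [ConditionallyCompleteLattice E]
variable {T : E → E} {L1 : Set E}

lemma addR (hT : IsCondExp T L1) {a b : E} (h : a ≤ b) (c : E) : a + c ≤ b + c :=
  hT.addLe a b c h

lemma addL (hT : IsCondExp T L1) {a b : E} (h : a ≤ b) (c : E) : c + a ≤ c + b := by
  rw [add_comm c a, add_comm c b]; exact hT.addR h c

lemma add4 (hT : IsCondExp T L1) {a b c d : E} (h1 : a ≤ b) (h2 : c ≤ d) :
    a + c ≤ b + d := le_trans (hT.addR h1 c) (hT.addL h2 b)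

lemma le_of_sub_nonneg (hT : IsCondExp T L1) {a b : E} (h : 0 ≤ b - a) : a ≤ b := by
  have h2 := hT.addR h a
  rw [zero_add, sub_add_cancel] at h2; exact h2

lemma sub_nonneg_of_le (hT : IsCondExp T L1) {a b : E} (h : a ≤ b) : 0 ≤ b - a := by
  have h2 := hT.addR h (-a)
  rw [add_neg_cancel] at h2
  rw [sub_eq_add_neg]; exact h2

lemma negle (hT : IsCondExp T L1) {a b : E} (h : a ≤ b) : -b ≤ -a := by
  have h2 := hT.addR h (-(a + b))
  have e1 : a + -(a + b) = -b := by ring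
  have e2 : b + -(a + b) = -a := by ring
  rwa [e1, e2] at h2

lemma le_sub_iff (hT : IsCondExp T L1) {a c x : E} : a + c ≤ x ↔ a ≤ x - c := by
  constructor
  · intro h; have h2 := hT.addR h (-c)
    have e1 : a + c + -c = a := by ring
    have e2 : x + -c = x - c := by ring
    rwa [e1, e2] at h2
  · intro h; have h2 := hT.addR h c
    have e : x - c + c = x := by ring
    rwa [e] at h2

lemma sub_le_iff' (hT : IsCondExp T L1) {a c x : E} : x - c ≤ a ↔ x ≤ a + c := by
  constructor
  · intro h; have h2 := hT.addR h c
    have e : x - c + c = x := by ring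
    rwa [e] at h2
  · intro h; have h2 := hT.addR h (-c)
    have e1 : x + -c = x - c := by ring
    have e2 : a + c + -c = a := by ring
    rwa [e1, e2] at h2

lemma sup_add' (hT : IsCondExp T L1) (a b c : E) : (a ⊔ b) + c = (a + c) ⊔ (b + c) := by
  apply le_antisymm
  · rw [hT.le_sub_iff]
    exact sup_le (hT.le_sub_iff.mp le_sup_left) (hT.le_sub_iff.mp le_sup_right)
  · exact sup_le (hT.addR le_sup_left c) (hT.addR le_sup_right c)

lemma inf_add' (hT : IsCondExp T L1) (a b c : E) : (a ⊓ b) + c = (a + c) ⊓ (b + c) := by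
  apply le_antisymm
  · exact le_inf (hT.addR inf_le_left c) (hT.addR inf_le_right c)
  · have h1 : (a + c) ⊓ (b + c) - c ≤ a := hT.sub_le_iff'.mpr inf_le_left
    have h2 : (a + c) ⊓ (b + c) - c ≤ b := hT.sub_le_iff'.mpr inf_le_right
    have := hT.addR (le_inf h1 h2) c
    have e : (a + c) ⊓ (b + c) - c + c = (a + c) ⊓ (b + c) := by ring
    rwa [e] at this

lemma neg_inf' (hT : IsCondExp T L1) (a b : E) : -(a ⊓ b) = (-a) ⊔ (-b) := by
  apply le_antisymm
  · have h : -((-a) ⊔ (-b)) ≤ a ⊓ b := by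
      refine le_inf ?_ ?_
      · have := hT.negle (le_sup_left : -a ≤ (-a) ⊔ (-b)); simpa using this
      · have := hT.negle (le_sup_right : -b ≤ (-a) ⊔ (-b)); simpa using this
    have := hT.negle h; simpa using this
  · exact sup_le (hT.negle inf_le_left) (hT.negle inf_le_right)

lemma neg_sup' (hT : IsCondExp T L1) (a b : E) : -(a ⊔ b) = (-a) ⊓ (-b) := by
  have := hT.neg_inf' (-a) (-b); simp at this
  rw [← this]; simp

lemma sup_add_inf' (hT : IsCondExp T L1) (a b : E) : (a ⊔ b) + (a ⊓ b) = a + b := by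
  have h1 : (a ⊓ b) + (-(a + b)) = (-b) ⊓ (-a) := by
    rw [hT.inf_add']; congr 1 <;> ring
  have h2 : (-b) ⊓ (-a) = -(b ⊔ a) := (hT.neg_sup' b a).symm
  rw [h2, sup_comm b a] at h1
  linear_combination h1

/-- positive part -/
lemma pos_sub_neg (hT : IsCondExp T L1) (a : E) : (a ⊔ 0) - ((-a) ⊔ 0) = a := by
  have h : -((-a) ⊔ 0) = a ⊓ 0 := by
    rw [hT.neg_sup']; simp
  rw [sub_eq_add_neg, h, hT.sup_add_inf' a 0, add_zero]

lemma pos_inf_neg (hT : IsCondExp T L1) (a : E) : (a ⊔ 0) ⊓ ((-a) ⊔ 0) = 0 := by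
  set p := a ⊔ 0 with hp
  set q := (-a) ⊔ 0 with hq
  have hm0 : 0 ≤ p ⊓ q := le_inf le_sup_right le_sup_right
  have hqm : p ⊓ q ≤ q := inf_le_right
  have h1 : p - q ≤ p - p ⊓ q := by
    rw [sub_eq_add_neg, sub_eq_add_neg]; exact hT.addL (hT.negle hqm) p
  have h2 : a ≤ p - p ⊓ q := by rw [← hT.pos_sub_neg a]; exact h1
  have h3 : (0 : E) ≤ p - p ⊓ q := hT.sub_nonneg_of_le inf_le_left
  have h4 : p ≤ p - p ⊓ q := sup_le h2 h3
  have h5 : p ⊓ q ≤ 0 := by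
    have := hT.addR h4 (p ⊓ q - p)
    have e1 : p + (p ⊓ q - p) = p ⊓ q := by ring
    have e2 : p - p ⊓ q + (p ⊓ q - p) = 0 := by ring
    rwa [e1, e2] at this
  exact le_antisymm h5 hm0

/-- semiclosedness : `x + x ≤ 0 → x ≤ 0`. -/
lemma semiclosed (hT : IsCondExp T L1) {x : E} (h : x + x ≤ 0) : x ≤ 0 := by
  have h1 : x ≤ -x := by
    have := hT.addR h (-x)
    have e1 : x + x + -x = x := by ring
    have e2 : (0 : E) + -x = -x := by ring
    rwa [e1, e2] at this
  have h2 : x ⊔ 0 ≤ (-x) ⊔ 0 := sup_le_sup_right h1 0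
  have h3 : x ⊔ 0 ≤ (x ⊔ 0) ⊓ ((-x) ⊔ 0) := le_inf le_rfl h2
  rw [hT.pos_inf_neg] at h3
  exact le_trans le_sup_left h3

lemma nonneg_of_two (hT : IsCondExp T L1) {x : E} (h : 0 ≤ x + x) : 0 ≤ x := by
  have : -x + -x ≤ 0 := by
    have := hT.negle h; simpa [neg_add] using this
  have h2 := hT.semiclosed this
  have h3 := hT.negle h2; simpa using h3

lemma abs_nonneg' (hT : IsCondExp T L1) (a : E) : 0 ≤ |a| := by
  have h1 : a + -a ≤ |a| + |a| := hT.add4 le_sup_left le_sup_right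
  rw [add_neg_cancel] at h1
  exact hT.nonneg_of_two h1

lemma abs_eq_pos_add_neg (hT : IsCondExp T L1) (a : E) : |a| = (a ⊔ 0) + ((-a) ⊔ 0) := by
  have key : (a ⊔ 0) + ((-a) ⊔ 0) = (0 ⊔ a) ⊔ ((-a) ⊔ 0) := by
    rw [hT.sup_add' a 0]
    congr 1
    · rw [add_comm, hT.sup_add']; simp
    · simp
  rw [key]
  have h2 : (0 ⊔ a) ⊔ ((-a) ⊔ 0) = (a ⊔ -a) ⊔ 0 := by
    simp only [sup_comm (0:E) a, sup_comm (-a) (0:E)]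
    rw [sup_assoc, ← sup_assoc (0:E), sup_idem, ← sup_assoc]
    exact sup_right_comm a 0 (-a)
  rw [h2]
  exact (sup_of_le_left (hT.abs_nonneg' a)).symm

lemma le_abs' (a : E) : a ≤ |a| := le_sup_left
lemma neg_le_abs' (a : E) : -a ≤ |a| := le_sup_right

lemma abs_le_iff' {a c : E} : |a| ≤ c ↔ a ≤ c ∧ -a ≤ c := sup_le_iff

lemma abs_neg' (a : E) : |-a| = |a| := by
  show -a ⊔ -(-a) = a ⊔ -a
  rw [neg_neg, sup_comm]

lemma abs_add' (hT : IsCondExp T L1) (a b : E) : |a + b| ≤ |a| + |b| := by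
  refine sup_le (hT.add4 (le_abs' a) (le_abs' b)) ?_
  rw [neg_add]
  exact hT.add4 (neg_le_abs' a) (neg_le_abs' b)

lemma abs_sub' (hT : IsCondExp T L1) (a b : E) : |a - b| ≤ |a| + |b| := by
  rw [sub_eq_add_neg]
  calc |a + -b| ≤ |a| + |-b| := hT.abs_add' a (-b)
  _ = |a| + |b| := by rw [abs_neg']

lemma eq_zero_of_abs_nonpos (hT : IsCondExp T L1) {a : E} (h : |a| ≤ 0) : a = 0 := by
  have h1 : a ≤ 0 := le_trans (le_abs' a) h
  have h2 : -a ≤ 0 := le_trans (neg_le_abs' a) h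
  have h3 : 0 ≤ a := by have := hT.negle h2; simpa using this
  exact le_antisymm h1 h3

end IsCondExp
end Stmt15Aux
namespace IsCondExp

variable {E : Type*} [CommRing E] [ConditionallyCompleteLattice E]
variable {T : E → E} {L1 : Set E}

lemma mulL (hT : IsCondExp T L1) {a b : E} (h : a ≤ b) {c : E} (hc : 0 ≤ c) :
    c * a ≤ c * b := by
  have h1 : 0 ≤ c * (b - a) := hT.mulPos c (b - a) hc (hT.sub_nonneg_of_le h)
  have h2 : c * (b - a) = c * b - c * a := by ring
  rw [h2] at h1
  exact hT.le_of_sub_nonneg h1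

lemma mulR (hT : IsCondExp T L1) {a b : E} (h : a ≤ b) {c : E} (hc : 0 ≤ c) :
    a * c ≤ b * c := by
  rw [mul_comm a c, mul_comm b c]; exact hT.mulL h hc

/-- disjoint elements have zero product -/
lemma disj_mul_zero (hT : IsCondExp T L1) {a b : E} (h : a ⊓ b = 0) : a * b = 0 := by
  have ha : 0 ≤ a := by rw [← h]; exact inf_le_left
  have hb : 0 ≤ b := by rw [← h]; exact inf_le_right
  have h1 : (b * a) ⊓ b = 0 := hT.fAlg a b b h hb
  have h2 : (a * b) ⊓ (b * a) = 0 := hT.fAlg b (b * a) a (by rw [inf_comm]; exact h1) ha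
  rw [mul_comm b a, inf_idem] at h2
  exact h2

lemma pos_mul_neg_part (hT : IsCondExp T L1) (a : E) : (a ⊔ 0) * ((-a) ⊔ 0) = 0 :=
  hT.disj_mul_zero (hT.pos_inf_neg a)

lemma sq_nonneg' (hT : IsCondExp T L1) (a : E) : 0 ≤ a * a := by
  set p := a ⊔ 0
  set q := (-a) ⊔ 0
  have e1 : p - q = a := hT.pos_sub_neg a
  have hpq : p * q = 0 := hT.pos_mul_neg_part a
  have hp : 0 ≤ p := le_sup_right
  have hq : 0 ≤ q := le_sup_right
  have key : a * a = p * p + q * q := by linear_combination (-(a + p - q)) * e1 - 2 * hpq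
  rw [key]
  have := hT.add4 (hT.mulPos p p hp hp) (hT.mulPos q q hq hq)
  simpa using this

lemma one_nonneg (hT : IsCondExp T L1) : (0 : E) ≤ 1 := by
  have := hT.sq_nonneg' 1; simpa using this

lemma add_nonneg' (hT : IsCondExp T L1) {x y : E} (hx : 0 ≤ x) (hy : 0 ≤ y) :
    0 ≤ x + y := by
  have := hT.add4 hx hy; simpa using this

lemma le_two_mul (hT : IsCondExp T L1) {x : E} (hx : 0 ≤ x) : x ≤ 2 * x := by
  have h := hT.addL hx x
  rw [add_zero] at h
  calc x ≤ x + x := h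
  _ = 2 * x := by ring

lemma abs_mul_le (hT : IsCondExp T L1) (a b : E) : |a * b| ≤ |a| * |b| := by
  set p := a ⊔ 0; set q := (-a) ⊔ 0; set r := b ⊔ 0; set s := (-b) ⊔ 0
  have ea : p - q = a := hT.pos_sub_neg a
  have eb : r - s = b := hT.pos_sub_neg b
  have eaa : |a| = p + q := hT.abs_eq_pos_add_neg a
  have ebb : |b| = r + s := hT.abs_eq_pos_add_neg b
  have hp : 0 ≤ p := le_sup_right
  have hq : 0 ≤ q := le_sup_right
  have hr : 0 ≤ r := le_sup_right
  have hs : 0 ≤ s := le_sup_right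
  refine sup_le ?_ ?_
  · apply hT.le_of_sub_nonneg
    have key : |a| * |b| - a * b = 2 * (p * s) + 2 * (q * r) := by
      rw [eaa, ebb, ← ea, ← eb]; ring
    rw [key]
    have h1 : 0 ≤ p * s + q * r := hT.add_nonneg' (hT.mulPos p s hp hs) (hT.mulPos q r hq hr)
    calc (0:E) ≤ p * s + q * r := h1
    _ ≤ 2 * (p * s + q * r) := hT.le_two_mul h1
    _ = 2 * (p * s) + 2 * (q * r) := by ring
  · apply hT.le_of_sub_nonneg
    have key : |a| * |b| - -(a * b) = 2 * (p * r) + 2 * (q * s) := by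
      rw [eaa, ebb, ← ea, ← eb]; ring
    rw [key]
    have h1 : 0 ≤ p * r + q * s := hT.add_nonneg' (hT.mulPos p r hp hr) (hT.mulPos q s hq hs)
    calc (0:E) ≤ p * r + q * s := h1
    _ ≤ 2 * (p * r + q * s) := hT.le_two_mul h1
    _ = 2 * (p * r) + 2 * (q * s) := by ring

lemma nsmul_nonneg' (hT : IsCondExp T L1) {m : E} (hm : 0 ≤ m) (n : ℕ) : 0 ≤ n • m := by
  induction n with
  | zero => simp
  | succ k ih =>
      rw [succ_nsmul]
      have := hT.add4 ih hm; simpa using this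

lemma nsmul_mono (hT : IsCondExp T L1) {m m' : E} (h : m ≤ m') (n : ℕ) : n • m ≤ n • m' := by
  induction n with
  | zero => simp
  | succ k ih => rw [succ_nsmul, succ_nsmul]; exact hT.add4 ih h

/-- Archimedean property from Dedekind completeness -/
lemma arch (hT : IsCondExp T L1) {m c : E} (h : ∀ n : ℕ, n • m ≤ c) : m ≤ 0 := by
  set S := Set.range fun n : ℕ => n • m with hS
  have hne : S.Nonempty := ⟨0 • m, 0, rfl⟩
  have hbdd : BddAbove S := ⟨c, by rintro x ⟨n, rfl⟩; exact h n⟩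
  set s := sSup S with hs
  have h1 : ∀ n : ℕ, n • m ≤ s - m := by
    intro n
    have h2 : (n + 1) • m ≤ s := le_csSup hbdd ⟨n + 1, rfl⟩
    rw [succ_nsmul] at h2
    exact hT.le_sub_iff.mp h2
  have h3 : s ≤ s - m := csSup_le hne (by rintro x ⟨n, rfl⟩; exact h1 n)
  have h4 := hT.addR h3 (m - s)
  have e1 : s + (m - s) = m := by ring
  have e2 : s - m + (m - s) = 0 := by ring
  rwa [e1, e2] at h4

/-- an `f`-algebra with multiplicative weak order unit is semiprime -/
lemma semiprime (hT : IsCondExp T L1) {b : E} (hb : 0 ≤ b) (hb2 : b * b = 0) : b = 0 := by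
  set m := b ⊓ 1 with hm
  have hm0 : 0 ≤ m := le_inf hb hT.one_nonneg
  have hm1 : m ≤ 1 := inf_le_right
  have hmb : m ≤ b := inf_le_left
  have hmm : m * m = 0 := by
    refine le_antisymm ?_ (hT.mulPos m m hm0 hm0)
    calc m * m ≤ m * b := hT.mulL hmb hm0
    _ ≤ b * b := hT.mulR hmb hb
    _ = 0 := hb2
  have key : ∀ n : ℕ, 0 ≤ (1 - m) ^ n ∧ (1 - m) ^ n = 1 - n • m := by
    intro n
    induction n with
    | zero => exact ⟨by simpa using hT.one_nonneg, by simp⟩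
    | succ k ih =>
        constructor
        · rw [pow_succ]
          exact hT.mulPos _ _ ih.1 (hT.sub_nonneg_of_le hm1)
        · rw [pow_succ, ih.2, succ_nsmul, nsmul_eq_mul]
          linear_combination (k : E) * hmm
  have hnm : ∀ n : ℕ, n • m ≤ 1 := by
    intro n
    have := (key n).1
    rw [(key n).2] at this
    have := hT.addR this (n • m)
    rw [zero_add, sub_add_cancel] at this
    exact this
  have hm_le : m ≤ 0 := hT.arch hnm
  have : m = 0 := le_antisymm hm_le hm0
  exact hT.weakUnit b hb this

/-- `t² ≤ s²` with `t, s ≥ 0` implies `t ≤ s` -/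
lemma le_of_sq_le_sq (hT : IsCondExp T L1) {t s : E} (ht : 0 ≤ t) (hs : 0 ≤ s)
    (h : t * t ≤ s * s) : t ≤ s := by
  set p := (t - s) ⊔ 0 with hp
  set q := (-(t - s)) ⊔ 0 with hq
  have e1 : p - q = t - s := hT.pos_sub_neg (t - s)
  have hpq : p * q = 0 := hT.pos_mul_neg_part (t - s)
  have hp0 : 0 ≤ p := le_sup_right
  have hq0 : 0 ≤ q := le_sup_right
  have hts : 0 ≤ t + s := by have := hT.add4 ht hs; simpa using this
  -- p * (t+s) = p*p + 2*(p*s)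
  have h2 : p * (t + s) = p * p + 2 * (p * s) := by
    linear_combination (-p) * e1 - hpq
  -- p * (t+s) ≤ (t+s) * q + (t²-s²) ≤ q*(t+s) ≤ 2*(q*s)
  have h3 : p * (t + s) ≤ q * (t + s) := by
    apply hT.le_of_sub_nonneg
    have e2 : q * (t + s) - p * (t + s) = (s * s - t * t) := by
      linear_combination (-(t + s)) * e1
    rw [e2]
    exact hT.sub_nonneg_of_le h
  have h4 : q * (t + s) ≤ 2 * (q * s) := by
    apply hT.le_of_sub_nonneg
    have e3 : 2 * (q * s) - q * (t + s) = q * q - p * q := by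
      linear_combination q * e1
    rw [e3, hpq, sub_zero]
    exact hT.mulPos q q hq0 hq0
  have h5 : p * p ≤ 2 * (q * s) := by
    have h6 : p * p ≤ p * p + 2 * (p * s) := by
      have h7 := hT.addL (hT.mulPos p s hp0 hs) (p * p)
      have h7b := hT.addL (hT.addR (hT.mulPos p s hp0 hs) (p*s)) (p*p)
      calc p * p = p * p + 0 := by ring
      _ ≤ p * p + (p * s + p * s) := by
          have := hT.add4 (hT.mulPos p s hp0 hs) (hT.mulPos p s hp0 hs)
          rw [add_zero] at this
          exact hT.addL this (p * p)
      _ = p * p + 2 * (p * s) := by ring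
    calc p * p ≤ p * p + 2 * (p * s) := h6
    _ = p * (t + s) := h2.symm
    _ ≤ q * (t + s) := h3
    _ ≤ 2 * (q * s) := h4
  -- p is disjoint from 2*(q*s) hence from p*p, hence p*p = 0
  have hdisj : ((2 * s) * q) ⊓ p = 0 := hT.fAlg q p (2 * s) (by rw [inf_comm]; exact hT.pos_inf_neg (t - s)) (by
    have := hT.add4 hs hs
    rw [add_zero] at this
    calc (0:E) ≤ s + s := this
    _ = 2 * s := by ring)
  have hpp : (p * p) ⊓ p = 0 := by
    refine le_antisymm ?_ (le_inf (hT.mulPos p p hp0 hp0) hp0)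
    calc (p * p) ⊓ p ≤ ((2 * s) * q) ⊓ p := by
          refine inf_le_inf_right p ?_
          calc p * p ≤ 2 * (q * s) := h5
          _ = (2 * s) * q := by ring
    _ = 0 := hdisj
  have hpp2 : (p * p) ⊓ (p * p) = 0 := hT.fAlg p (p * p) p (by rw [inf_comm]; exact hpp) hp0
  rw [inf_idem] at hpp2
  have hp_zero : p = 0 := hT.semiprime hp0 hpp2
  -- conclude
  have : t - s ≤ 0 := by
    have h8 : t - s ≤ p := le_sup_left
    rw [hp_zero] at h8; exact h8
  have := hT.addR this s
  rw [sub_add_cancel, zero_add] at this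
  exact this

end IsCondExp
namespace IsCondExp

variable {E : Type*} [CommRing E] [ConditionallyCompleteLattice E]
variable {T : E → E} {L1 : Set E}

lemma t_zero (hT : IsCondExp T L1) : T 0 = 0 := by
  have h := hT.addT 0 0
  rw [add_zero] at h
  linear_combination -h

lemma t_neg (hT : IsCondExp T L1) (a : E) : T (-a) = -T a := by
  have h := hT.addT a (-a)
  rw [add_neg_cancel, hT.t_zero] at h
  linear_combination -h

lemma t_sub (hT : IsCondExp T L1) (a b : E) : T (a - b) = T a - T b := by
  rw [sub_eq_add_neg, hT.addT, hT.t_neg]; ring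

lemma t_mono (hT : IsCondExp T L1) {a b : E} (h : a ≤ b) : T a ≤ T b := by
  have h1 : 0 ≤ T (b - a) := hT.posT _ (hT.sub_nonneg_of_le h)
  rw [hT.t_sub] at h1
  exact hT.le_of_sub_nonneg h1

lemma rt_fix (hT : IsCondExp T L1) {a : E} (h : a ∈ RT T) : T a = a := by
  obtain ⟨b, rfl⟩ := h
  exact hT.projT b

lemma fix_rt {a : E} (h : T a = a) : a ∈ RT T := ⟨a, h⟩

lemma rt_zero (hT : IsCondExp T L1) : (0 : E) ∈ RT T := fix_rt hT.t_zero

lemma rt_add (hT : IsCondExp T L1) {a b : E} (ha : a ∈ RT T) (hb : b ∈ RT T) :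
    a + b ∈ RT T := fix_rt (by rw [hT.addT, hT.rt_fix ha, hT.rt_fix hb])

lemma rt_sub (hT : IsCondExp T L1) {a b : E} (ha : a ∈ RT T) (hb : b ∈ RT T) :
    a - b ∈ RT T := fix_rt (by rw [hT.t_sub, hT.rt_fix ha, hT.rt_fix hb])

/-- `R(T)` is closed under suprema. -/
lemma rt_lub (hT : IsCondExp T L1) {S : Set E} {s : E} (hS : ∀ x ∈ S, x ∈ RT T)
    (h : IsLUB S s) : s ∈ RT T := by
  have hub : T s ∈ upperBounds S := by
    intro x hx
    rw [← hT.rt_fix (hS x hx)]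
    exact hT.t_mono (h.1 hx)
  have h1 : s ≤ T s := h.2 hub
  have h2 : T (T s - s) = 0 := by rw [hT.t_sub, hT.projT, sub_self]
  have h3 : T s - s = 0 := hT.strictT _ (hT.sub_nonneg_of_le h1) h2
  exact fix_rt (by linear_combination h3)

/-- `R(T)` is closed under infima. -/
lemma rt_glb (hT : IsCondExp T L1) {S : Set E} {s : E} (hS : ∀ x ∈ S, x ∈ RT T)
    (h : IsGLB S s) : s ∈ RT T := by
  have hlb : T s ∈ lowerBounds S := by
    intro x hx
    rw [← hT.rt_fix (hS x hx)]
    exact hT.t_mono (h.1 hx)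
  have h1 : T s ≤ s := h.2 hlb
  have h2 : T (s - T s) = 0 := by rw [hT.t_sub, hT.projT, sub_self]
  have h3 : s - T s = 0 := hT.strictT _ (hT.sub_nonneg_of_le h1) h2
  exact fix_rt (by linear_combination -h3)

end IsCondExp

namespace Stmt15

open IsCondExp

variable {E : Type*} [CommRing E] [ConditionallyCompleteLattice E]
variable {T : E → E} {L1 : Set E} {sqrt : E → E}

lemma nrm_nonneg (hT : IsCondExp T L1) (hsqrt : IsSqrt sqrt) (x : E) :
    0 ≤ nrm T sqrt x :=
  (hsqrt _ (hT.posT _ (hT.sq_nonneg' x))).1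

/-- `‖·‖_{T,2}` is monotone on order intervals. -/
lemma nrm_mono (hT : IsCondExp T L1) (hsqrt : IsSqrt sqrt) {x y : E}
    (hx : 0 ≤ x) (h : |y| ≤ x) : nrm T sqrt y ≤ nrm T sqrt x := by
  have habs : y * y = |y| * |y| := by
    set p := y ⊔ 0; set q := (-y) ⊔ 0
    have e1 : p - q = y := hT.pos_sub_neg y
    have e2 : |y| = p + q := hT.abs_eq_pos_add_neg y
    have hpq : p * q = 0 := hT.pos_mul_neg_part y
    rw [e2, ← e1]
    linear_combination (-4 : E) * hpq
  have hsq : y * y ≤ x * x := by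
    rw [habs]
    calc |y| * |y| ≤ |y| * x := hT.mulL h (hT.abs_nonneg' y)
    _ ≤ x * x := hT.mulR h hx
  have hT2 : T (y * y) ≤ T (x * x) := hT.t_mono hsq
  have hy2 : 0 ≤ T (y * y) := hT.posT _ (hT.sq_nonneg' y)
  have hx2 : 0 ≤ T (x * x) := hT.posT _ (hT.sq_nonneg' x)
  refine hT.le_of_sq_le_sq (hsqrt _ hy2).1 (hsqrt _ hx2).1 ?_
  simp only [nrm]
  rw [(hsqrt _ hy2).2, (hsqrt _ hx2).2]
  exact hT2

/-- the difference of two members of `Ê` is in `Ê`. -/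
lemma memEhat_sub (hT : IsCondExp T L1) (hsqrt : IsSqrt sqrt) {F G : E → E}
    (hF : MemEhat T L1 sqrt F) (hG : MemEhat T L1 sqrt G) :
    MemEhat T L1 sqrt (fun g => F g - G g) := by
  obtain ⟨⟨hFrt, hFadd, hFhom, hFbd⟩, kF, hkF, hkF0, hkFb⟩ := hF
  obtain ⟨⟨hGrt, hGadd, hGhom, hGbd⟩, kG, hkG, hkG0, hkGb⟩ := hG
  refine ⟨⟨?_, ?_, ?_, ?_⟩, kF + kG, hT.rt_add hkF hkG, hT.add_nonneg' hkF0 hkG0, ?_⟩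
  · intro x hx; exact hT.rt_sub (hFrt x hx) (hGrt x hx)
  · intro x hx y hy
    simp only [hFadd x hx y hy, hGadd x hx y hy]; ring
  · intro α hα x hx
    simp only [hFhom α hα x hx, hGhom α hα x hx]; ring
  · intro x hx hx0
    obtain ⟨bF, hbF⟩ := hFbd x hx hx0
    obtain ⟨bG, hbG⟩ := hGbd x hx hx0
    refine ⟨bF + bG, fun y hy hyx => ?_⟩
    calc |F y - G y| ≤ |F y| + |G y| := hT.abs_sub' _ _
    _ ≤ bF + bG := hT.add4 (hbF y hy hyx) (hbG y hy hyx)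
  · intro x hx
    calc |F x - G x| ≤ |F x| + |G x| := hT.abs_sub' _ _
    _ ≤ kF * nrm T sqrt x + kG * nrm T sqrt x := hT.add4 (hkFb x hx) (hkGb x hx)
    _ = (kF + kG) * nrm T sqrt x := by ring

end Stmt15
namespace Stmt15

open IsCondExp

variable {E : Type*} [CommRing E] [ConditionallyCompleteLattice E]
variable {T : E → E} {L1 : Set E}

/-- disjointness is additive -/
lemma disj_add (hT : IsCondExp T L1) {z u w : E} (hz : 0 ≤ z) (hu : 0 ≤ u) (hw : 0 ≤ w)
    (h1 : z ⊓ u = 0) (h2 : z ⊓ w = 0) : z ⊓ (u + w) = 0 := by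
  set d := z ⊓ (u + w) with hd
  have hd0 : 0 ≤ d := le_inf hz (hT.add_nonneg' hu hw)
  have hdz : d ≤ z := inf_le_left
  have hduw : d ≤ u + w := inf_le_right
  have key : d - z ⊓ u = (d - z) ⊔ (d - u) := by
    rw [sub_eq_add_neg, hT.neg_inf', add_comm, hT.sup_add']
    congr 1 <;> ring
  have hb : (d - z) ⊔ (d - u) ≤ z ⊓ w := by
    have hdz' : d - z ≤ 0 := hT.sub_le_iff'.mpr (by simpa using hdz)
    have hdu1 : d - u ≤ z := hT.sub_le_iff'.mpr (by
      calc d ≤ z := hdz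
      _ ≤ z + u := by have := hT.addL hu z; simpa using this)
    have hdu2 : d - u ≤ w := hT.sub_le_iff'.mpr (by
      calc d ≤ u + w := hduw
      _ = w + u := by ring)
    exact sup_le (le_inf (le_trans hdz' hz) (le_trans hdz' hw)) (le_inf hdu1 hdu2)
  have h3 : d - z ⊓ u ≤ 0 := by rw [key]; rw [← h2]; exact hb
  rw [h1, sub_zero] at h3
  exact le_antisymm h3 hd0

variable {ι : Type*} [Preorder ι]

section Family

variable (hT : IsCondExp T L1)
variable (hdir : ∀ a b : ι, ∃ c : ι, a ≤ c ∧ b ≤ c)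
variable (δ : ι) (v : ι → E)
variable (hpos : ∀ a, δ ≤ a → 0 ≤ v a)
variable (hanti : ∀ a b, δ ≤ a → a ≤ b → v b ≤ v a)
variable (hglb : ∀ z : E, (∀ a, δ ≤ a → z ≤ v a) → z ≤ 0)

set_option linter.unusedSectionVars false

include hT hdir hpos hanti hglb

/-- tail version of the glb hypothesis -/
lemma glb_tail (a₀ : ι) (ha₀ : δ ≤ a₀) (z : E)
    (h : ∀ a, a₀ ≤ a → z ≤ v a) : z ≤ 0 := by
  refine hglb z fun a ha => ?_
  obtain ⟨c, hc1, hc2⟩ := hdir a a₀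
  exact le_trans (h c hc2) (hanti a c ha hc1)

/-- `inf (n • v a) = 0` for every `n`. -/
lemma glb_nsmul : ∀ (n : ℕ) (a₀ : ι), δ ≤ a₀ →
    ∀ z : E, (∀ a, a₀ ≤ a → z ≤ n • v a) → z ≤ 0 := by
  intro n
  induction n with
  | zero =>
      intro a₀ ha₀ z h
      have := h a₀ le_rfl
      simpa using this
  | succ k ih =>
      intro a₀ ha₀ z h
      have key : ∀ a₁, a₀ ≤ a₁ → z ≤ v a₁ := by
        intro a₁ ha₁
        have ha₁δ : δ ≤ a₁ := le_trans ha₀ ha₁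
        have h2 : ∀ a, a₁ ≤ a → z - v a₁ ≤ k • v a := by
          intro a ha
          have h3 := h a (le_trans ha₁ ha)
          rw [succ_nsmul] at h3
          have h4 : z - v a ≤ k • v a := hT.sub_le_iff'.mpr h3
          have h5 : z - v a₁ ≤ z - v a := by
            rw [sub_eq_add_neg, sub_eq_add_neg]
            exact hT.addL (hT.negle (hanti a₁ a ha₁δ ha)) z
          exact le_trans h5 h4
        have h6 : z - v a₁ ≤ 0 := ih a₁ ha₁δ _ h2
        have := hT.addR h6 (v a₁)
        rwa [sub_add_cancel, zero_add] at this
      exact glb_tail hT hdir δ v hpos hanti hglb a₀ ha₀ z key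

/-- order continuity of multiplication: if `v a ↓ 0` and `0 ≤ w ≤ K * v a` then `w = 0`. -/
lemma mul_glb (K w : E) (hK : 0 ≤ K) (hw : 0 ≤ w)
    (h : ∀ a, δ ≤ a → w ≤ K * v a) : w = 0 := by
  have hCpos : 0 ≤ v δ := hpos δ le_rfl
  -- step 1 : w ≤ (K - n•1)⁺ * v δ for all n
  have step1 : ∀ n : ℕ, w ≤ ((K - n • (1:E)) ⊔ 0) * v δ := by
    intro n
    set qn := (K - n • (1:E)) ⊔ 0 with hqn
    have hqn0 : 0 ≤ qn := le_sup_right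
    have hdecomp : qn = K - K ⊓ (n • (1:E)) := by
      have h1 : qn + n • (1:E) = K ⊔ (n • (1:E)) := by
        rw [hqn, hT.sup_add']; congr 1 <;> ring
      have h2 := hT.sup_add_inf' K (n • (1:E))
      linear_combination h1 + h2
    have key : ∀ a, δ ≤ a → w - qn * v δ ≤ n • v a := by
      intro a ha
      have h1 : w ≤ (K ⊓ (n • (1:E))) * v a + qn * v a := by
        have e : (K ⊓ (n • (1:E))) * v a + qn * v a = K * v a := by
          rw [hdecomp]; ring
        rw [e]; exact h a ha
      have h2 : (K ⊓ (n • (1:E))) * v a ≤ n • v a := by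
        have h3 : (K ⊓ (n • (1:E))) * v a ≤ (n • (1:E)) * v a :=
          hT.mulR inf_le_right (hpos a ha)
        have e : (n • (1:E)) * v a = n • v a := by
          rw [nsmul_eq_mul, nsmul_eq_mul, mul_one]
        rwa [e] at h3
      have h4 : qn * v a ≤ qn * v δ := hT.mulL (hanti δ a le_rfl ha) hqn0
      have h5 : w ≤ n • v a + qn * v δ := le_trans h1 (hT.add4 h2 h4)
      exact hT.sub_le_iff'.mpr h5
    have h6 : w - qn * v δ ≤ 0 := glb_nsmul hT hdir δ v hpos hanti hglb n δ le_rfl _ key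
    have := hT.addR h6 (qn * v δ)
    rwa [sub_add_cancel, zero_add] at this
  -- step 2 : w is disjoint from (n•1 - K)⁺
  have step2 : ∀ n : ℕ, w ⊓ ((n • (1:E) - K) ⊔ 0) = 0 := by
    intro n
    set qn := (K - n • (1:E)) ⊔ 0 with hqn
    set pn := (n • (1:E) - K) ⊔ 0 with hpn
    have hqp : qn ⊓ pn = 0 := by
      have h0 := hT.pos_inf_neg (K - n • (1:E))
      have e : -(K - n • (1:E)) = n • (1:E) - K := by ring
      rwa [e] at h0
    have hdisj : (v δ * qn) ⊓ pn = 0 := hT.fAlg qn pn (v δ) hqp hCpos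
    refine le_antisymm ?_ (le_inf hw le_sup_right)
    calc w ⊓ pn ≤ (v δ * qn) ⊓ pn := by
          refine inf_le_inf_right pn ?_
          calc w ≤ qn * v δ := step1 n
          _ = v δ * qn := by ring
    _ = 0 := hdisj
  -- step 3 : m = w ⊓ 1 satisfies n • m ≤ K for all n
  set m := w ⊓ 1 with hm
  have hm0 : 0 ≤ m := le_inf hw hT.one_nonneg
  have hm1 : m ≤ 1 := inf_le_right
  have hmw : m ≤ w := inf_le_left
  have step3 : ∀ n : ℕ, n • m ≤ K := by
    intro n
    set rn := (n • m - K) ⊔ 0 with hrn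
    have hrn0 : 0 ≤ rn := le_sup_right
    have h1 : rn ≤ (n • (1:E) - K) ⊔ 0 := by
      refine sup_le_sup_right ?_ 0
      rw [sub_eq_add_neg, sub_eq_add_neg]
      exact hT.addR (hT.nsmul_mono hm1 n) (-K)
    have h2 : rn ⊓ m = 0 := by
      refine le_antisymm ?_ (le_inf hrn0 hm0)
      calc rn ⊓ m ≤ ((n • (1:E) - K) ⊔ 0) ⊓ w := inf_le_inf h1 hmw
      _ = 0 := by rw [inf_comm]; exact step2 n
    have h3 : rn ⊓ (n • m) = 0 := by
      have haux : ∀ j : ℕ, rn ⊓ (j • m) = 0 := by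
        intro j
        induction j with
        | zero =>
            rw [zero_nsmul]
            exact inf_eq_right.mpr hrn0
        | succ i ih =>
            rw [succ_nsmul]
            exact disj_add hT hrn0 (hT.nsmul_nonneg' hm0 i) hm0 ih h2
      exact haux n
    have h4 : rn ≤ n • m := by
      refine sup_le ?_ (hT.nsmul_nonneg' hm0 n)
      have h5 : n • m - K ≤ n • m - 0 := by
        rw [sub_eq_add_neg, sub_eq_add_neg]
        exact hT.addL (hT.negle hK) (n • m)
      simpa using h5
    have h5 : rn = 0 := by
      calc rn = rn ⊓ (n • m) := (inf_eq_left.mpr h4).symm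
      _ = 0 := h3
    have h6 : n • m - K ≤ 0 := by
      have h7 : n • m - K ≤ rn := le_sup_left
      rw [h5] at h7; exact h7
    have := hT.addR h6 K
    rwa [sub_add_cancel, zero_add] at this
  have hmle : m ≤ 0 := hT.arch step3
  have hmzero : m = 0 := le_antisymm hmle hm0
  exact hT.weakUnit w hw hmzero

/-- uniqueness of order limits: `|z| ≤ v a * K` eventually forces `z = 0`. -/
lemma abs_glb_zero (z K : E) (hK : 0 ≤ K)
    (h : ∀ a, δ ≤ a → |z| ≤ v a * K) : z = 0 := by
  have h1 : |z| = 0 := by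
    refine mul_glb hT hdir δ v hpos hanti hglb K |z| hK (hT.abs_nonneg' z) ?_
    intro a ha
    calc |z| ≤ v a * K := h a ha
    _ = K * v a := by ring
  exact hT.eq_zero_of_abs_nonpos (le_of_eq h1)

end Family

end Stmt15
namespace Stmt15

open IsCondExp

variable {E : Type*} [CommRing E] [ConditionallyCompleteLattice E]
variable {T : E → E} {L1 : Set E}
variable {ι : Type*} [Preorder ι]

section Lim

variable (hT : IsCondExp T L1)
variable (hdir : ∀ a b : ι, ∃ c : ι, a ≤ c ∧ b ≤ c)
variable (δ : ι) (v : ι → E)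
variable (hpos : ∀ a, δ ≤ a → 0 ≤ v a)
variable (hanti : ∀ a b, δ ≤ a → a ≤ b → v b ≤ v a)

set_option linter.unusedSectionVars false

include hT hdir hpos hanti

lemma lim_bound (g : ι → E) (K : E) (hK : 0 ≤ K)
    (hg : ∀ a, δ ≤ a → ∀ b c, a ≤ b → a ≤ c → |g b - g c| ≤ v a * K) :
    (∀ a, δ ≤ a →
      IsLUB {w : E | ∃ b, a ≤ b ∧ w = g b} (sSup {w : E | ∃ b, a ≤ b ∧ w = g b})) ∧
    IsGLB {z : E | ∃ a, δ ≤ a ∧ z = sSup {w : E | ∃ b, a ≤ b ∧ w = g b}}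
      (sInf {z : E | ∃ a, δ ≤ a ∧ z = sSup {w : E | ∃ b, a ≤ b ∧ w = g b}}) ∧
    ∀ a, δ ≤ a → ∀ b, a ≤ b →
      |g b - sInf {z : E | ∃ a, δ ≤ a ∧ z = sSup {w : E | ∃ b, a ≤ b ∧ w = g b}}| ≤
        v a * K := by
  have habs : ∀ a, δ ≤ a → ∀ b c, a ≤ b → a ≤ c → g b ≤ g c + v a * K := by
    intro a ha b c hb hc
    have h1 : g b - g c ≤ v a * K := le_trans (le_abs' _) (hg a ha b c hb hc)
    have h2 := hT.sub_le_iff'.mp h1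
    calc g b ≤ v a * K + g c := h2
    _ = g c + v a * K := by ring
  have hneS : ∀ a : ι, ({w : E | ∃ b, a ≤ b ∧ w = g b}).Nonempty :=
    fun a => ⟨g a, a, le_rfl, rfl⟩
  have hbddS : ∀ a, δ ≤ a → BddAbove {w : E | ∃ b, a ≤ b ∧ w = g b} := by
    intro a ha
    refine ⟨g a + v a * K, ?_⟩
    rintro w ⟨b, hb, rfl⟩
    exact habs a ha b a hb le_rfl
  have hlub : ∀ a, δ ≤ a →
      IsLUB {w : E | ∃ b, a ≤ b ∧ w = g b} (sSup {w : E | ∃ b, a ≤ b ∧ w = g b}) :=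
    fun a ha => isLUB_csSup (hneS a) (hbddS a ha)
  have hneO : ({z : E | ∃ a, δ ≤ a ∧ z = sSup {w : E | ∃ b, a ≤ b ∧ w = g b}}).Nonempty :=
    ⟨_, δ, le_rfl, rfl⟩
  have hlbO : (g δ - v δ * K) ∈
      lowerBounds {z : E | ∃ a, δ ≤ a ∧ z = sSup {w : E | ∃ b, a ≤ b ∧ w = g b}} := by
    rintro z ⟨a, ha, rfl⟩
    have h1 : g a ≤ sSup {w : E | ∃ b, a ≤ b ∧ w = g b} :=
      le_csSup (hbddS a ha) ⟨a, le_rfl, rfl⟩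
    have h2 : g δ - v δ * K ≤ g a :=
      hT.sub_le_iff'.mpr (habs δ le_rfl δ a le_rfl ha)
    exact le_trans h2 h1
  have hbddO : BddBelow {z : E | ∃ a, δ ≤ a ∧ z = sSup {w : E | ∃ b, a ≤ b ∧ w = g b}} :=
    ⟨_, hlbO⟩
  have hglbO := isGLB_csInf hneO hbddO
  refine ⟨hlub, hglbO, ?_⟩
  intro a ha b hb
  set L := sInf {z : E | ∃ a, δ ≤ a ∧ z = sSup {w : E | ∃ b, a ≤ b ∧ w = g b}} with hL
  have hupper : L ≤ g b + v a * K := by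
    obtain ⟨a', h1, h2⟩ := hdir a b
    have ha' : δ ≤ a' := le_trans ha h1
    have h3 : L ≤ sSup {w : E | ∃ b, a' ≤ b ∧ w = g b} :=
      csInf_le hbddO ⟨a', ha', rfl⟩
    have h4 : sSup {w : E | ∃ b, a' ≤ b ∧ w = g b} ≤ g b + v a * K := by
      refine csSup_le (hneS a') ?_
      rintro w ⟨c, hc, rfl⟩
      exact habs a ha c b (le_trans h1 hc) hb
    exact le_trans h3 h4
  have hlower : g b - v a * K ≤ L := by
    refine le_csInf hneO ?_
    rintro z ⟨a'', ha'', rfl⟩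
    obtain ⟨c, hc1, hc2⟩ := hdir a'' a
    have h1 : g b ≤ g c + v a * K := habs a ha b c hb hc2
    have h2 : g b - v a * K ≤ g c := hT.sub_le_iff'.mpr h1
    have h3 : g c ≤ sSup {w : E | ∃ b, a'' ≤ b ∧ w = g b} :=
      le_csSup (hbddS a'' ha'') ⟨c, hc1, rfl⟩
    exact le_trans h2 h3
  refine sup_le ?_ ?_
  · refine hT.sub_le_iff'.mpr ?_
    have := hT.sub_le_iff'.mp hlower
    calc g b ≤ L + v a * K := this
    _ = v a * K + L := by ring
  · have e : -(g b - L) = L - g b := by ring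
    rw [e]
    refine hT.sub_le_iff'.mpr ?_
    calc L ≤ g b + v a * K := hupper
    _ = v a * K + g b := by ring

end Lim

end Stmt15
namespace Stmt15

open IsCondExp

variable {E : Type*} [CommRing E] [ConditionallyCompleteLattice E]

lemma abs_sub_comm' (a b : E) : |a - b| = |b - a| := by
  have e : -(a - b) = b - a := by ring
  rw [← e, abs_neg']

/-- Main construction: given the limit functional `G` with the approximation
property, show `G ∈ Ê` and that the net converges `T`-strongly to it. -/
lemma build {T : E → E} {L1 : Set E} (hT : IsCondExp T L1)
    {sqrt : E → E} (hsqrt : IsSqrt sqrt)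
    (NH : (E → E) → E)
    (hNH : ∀ F : E → E, MemEhat T L1 sqrt F →
      IsGLB {k : E | k ∈ RT T ∧ 0 ≤ k ∧ ∀ x ∈ L2 L1, |F x| ≤ k * nrm T sqrt x} (NH F) ∧
      ∀ x ∈ L2 L1, |F x| ≤ NH F * nrm T sqrt x)
    {ι : Type*} [Preorder ι] (hdir : ∀ a b : ι, ∃ c : ι, a ≤ c ∧ b ≤ c)
    (F : ι → E → E) (hF : ∀ a : ι, MemEhat T L1 sqrt (F a))
    (δ : ι) (v : ι → E)
    (hvpos : ∀ a, δ ≤ a → 0 ≤ v a)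
    (hvanti : ∀ a b : ι, δ ≤ a → a ≤ b → v b ≤ v a)
    (hvrt : ∀ a, δ ≤ a → v a ∈ RT T)
    (hvglb : ∀ z : E, (∀ a, δ ≤ a → z ≤ v a) → z ≤ 0)
    (hcb : ∀ a, δ ≤ a → ∀ b c, a ≤ b → a ≤ c → ∀ x, x ∈ L2 L1 →
      |F b x - F c x| ≤ v a * nrm T sqrt x)
    (G : E → E)
    (hGlim : ∀ x : E, ∀ K : E, 0 ≤ K →
      (∀ a, δ ≤ a → ∀ b c, a ≤ b → a ≤ c → |F b x - F c x| ≤ v a * K) →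
      ∀ a, δ ≤ a → ∀ b, a ≤ b → |F b x - G x| ≤ v a * K)
    (hGrt : ∀ x, x ∈ L2 L1 → G x ∈ RT T) :
    MemEhat T L1 sqrt G ∧
    (∀ a : ι, δ ≤ a →
      IsLUB {w : E | ∃ b : ι, a ≤ b ∧ w = NH (fun g => F b g - G g)}
        (sSup {w : E | ∃ b : ι, a ≤ b ∧ w = NH (fun g => F b g - G g)})) ∧
    IsGLB {w : E | ∃ a : ι, δ ≤ a ∧
      w = sSup {w : E | ∃ b : ι, a ≤ b ∧ w = NH (fun g => F b g - G g)}} 0 := by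
  have hnrm : ∀ x : E, 0 ≤ nrm T sqrt x := nrm_nonneg hT hsqrt
  -- the fundamental approximation property
  have hGb : ∀ x, x ∈ L2 L1 → ∀ a, δ ≤ a → ∀ b, a ≤ b →
      |F b x - G x| ≤ v a * nrm T sqrt x := by
    intro x hx
    exact hGlim x (nrm T sqrt x) (hnrm x) (fun a ha b c hb hc => hcb a ha b c hb hc x hx)
  -- G is a member of Ê
  have hGmem : MemEhat T L1 sqrt G := by
    refine ⟨⟨hGrt, ?_, ?_, ?_⟩, v δ + Classical.choose (hF δ).2, ?_, ?_, ?_⟩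
    · -- additivity
      intro x hx y hy
      set Kx := nrm T sqrt x
      set Ky := nrm T sqrt y
      have hC : ∀ a, δ ≤ a → ∀ b c, a ≤ b → a ≤ c →
          |F b (x + y) - F c (x + y)| ≤ v a * (Kx + Ky) := by
        intro a ha b c hb hc
        have e : F b (x + y) - F c (x + y) = (F b x - F c x) + (F b y - F c y) := by
          rw [(hF b).1.2.1 x hx y hy, (hF c).1.2.1 x hx y hy]; ring
        rw [e]
        calc |(F b x - F c x) + (F b y - F c y)| ≤ |F b x - F c x| + |F b y - F c y| :=
              hT.abs_add' _ _
        _ ≤ v a * Kx + v a * Ky :=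
              hT.add4 (hcb a ha b c hb hc x hx) (hcb a ha b c hb hc y hy)
        _ = v a * (Kx + Ky) := by ring
      have hKnn : 0 ≤ Kx + Ky := hT.add_nonneg' (hnrm x) (hnrm y)
      have hbxy := hGlim (x + y) (Kx + Ky) hKnn hC
      have hdef : ∀ a, δ ≤ a →
          |G (x + y) - (G x + G y)| ≤ v a * (Kx + Ky + Kx + Ky) := by
        intro a ha
        have e : G (x + y) - (G x + G y) =
            (G (x + y) - F a (x + y)) + ((F a x - G x) + (F a y - G y)) := by
          rw [(hF a).1.2.1 x hx y hy]; ring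
        rw [e]
        calc |(G (x + y) - F a (x + y)) + ((F a x - G x) + (F a y - G y))|
            ≤ |G (x + y) - F a (x + y)| + |(F a x - G x) + (F a y - G y)| :=
              hT.abs_add' _ _
        _ ≤ |G (x + y) - F a (x + y)| + (|F a x - G x| + |F a y - G y|) := by
              refine hT.addL (hT.abs_add' _ _) _
        _ ≤ v a * (Kx + Ky) + (v a * Kx + v a * Ky) := by
              refine hT.add4 ?_ (hT.add4 (hGb x hx a ha a le_rfl) (hGb y hy a ha a le_rfl))
              rw [abs_sub_comm']
              exact hbxy a ha a le_rfl
        _ = v a * (Kx + Ky + Kx + Ky) := by ring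
      have hz : G (x + y) - (G x + G y) = 0 := by
        exact abs_glb_zero hT hdir δ v hvpos hvanti hvglb _ (Kx + Ky + Kx + Ky)
          (hT.add_nonneg' (hT.add_nonneg' hKnn (hnrm x)) (hnrm y)) hdef
      linear_combination hz
    · -- homogeneity
      intro α hα x hx
      set Kx := nrm T sqrt x
      have hα0 : 0 ≤ |α| := hT.abs_nonneg' α
      have hK3 : 0 ≤ |α| * Kx := hT.mulPos _ _ hα0 (hnrm x)
      have hC : ∀ a, δ ≤ a → ∀ b c, a ≤ b → a ≤ c →
          |F b (α * x) - F c (α * x)| ≤ v a * (|α| * Kx) := by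
        intro a ha b c hb hc
        have e : F b (α * x) - F c (α * x) = α * (F b x - F c x) := by
          rw [(hF b).1.2.2.1 α hα x hx, (hF c).1.2.2.1 α hα x hx]; ring
        rw [e]
        calc |α * (F b x - F c x)| ≤ |α| * |F b x - F c x| := hT.abs_mul_le _ _
        _ ≤ |α| * (v a * Kx) := hT.mulL (hcb a ha b c hb hc x hx) hα0
        _ = v a * (|α| * Kx) := by ring
      have hbax := hGlim (α * x) (|α| * Kx) hK3 hC
      have hdef : ∀ a, δ ≤ a →
          |G (α * x) - α * G x| ≤ v a * (|α| * Kx + |α| * Kx) := by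
        intro a ha
        have e : G (α * x) - α * G x =
            (G (α * x) - F a (α * x)) + α * (F a x - G x) := by
          rw [(hF a).1.2.2.1 α hα x hx]; ring
        rw [e]
        calc |(G (α * x) - F a (α * x)) + α * (F a x - G x)|
            ≤ |G (α * x) - F a (α * x)| + |α * (F a x - G x)| := hT.abs_add' _ _
        _ ≤ v a * (|α| * Kx) + |α| * (v a * Kx) := by
              refine hT.add4 ?_ ?_
              · rw [abs_sub_comm']; exact hbax a ha a le_rfl
              · calc |α * (F a x - G x)| ≤ |α| * |F a x - G x| := hT.abs_mul_le _ _
                _ ≤ |α| * (v a * Kx) := hT.mulL (hGb x hx a ha a le_rfl) hα0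
        _ = v a * (|α| * Kx + |α| * Kx) := by ring
      have hz : G (α * x) - α * G x = 0 := by
        exact abs_glb_zero hT hdir δ v hvpos hvanti hvglb _ (|α| * Kx + |α| * Kx)
          (hT.add_nonneg' hK3 hK3) hdef
      linear_combination hz
    · -- order boundedness
      intro x hx hx0
      obtain ⟨bd, hbd⟩ := (hF δ).1.2.2.2 x hx hx0
      refine ⟨v δ * nrm T sqrt x + bd, fun y hy hyx => ?_⟩
      have e : G y = (G y - F δ y) + F δ y := by ring
      calc |G y| = |(G y - F δ y) + F δ y| := by rw [← e]
      _ ≤ |G y - F δ y| + |F δ y| := hT.abs_add' _ _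
      _ ≤ v δ * nrm T sqrt x + bd := by
            refine hT.add4 ?_ (hbd y hy hyx)
            rw [abs_sub_comm']
            calc |F δ y - G y| ≤ v δ * nrm T sqrt y := hGb y hy δ le_rfl δ le_rfl
            _ ≤ v δ * nrm T sqrt x :=
                  hT.mulL (nrm_mono hT hsqrt hx0 hyx) (hvpos δ le_rfl)
    · exact hT.rt_add (hvrt δ le_rfl) (Classical.choose_spec (hF δ).2).1
    · exact hT.add_nonneg' (hvpos δ le_rfl) (Classical.choose_spec (hF δ).2).2.1
    · intro x hx
      have hk := Classical.choose_spec (hF δ).2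
      have e : G x = (G x - F δ x) + F δ x := by ring
      calc |G x| = |(G x - F δ x) + F δ x| := by rw [← e]
      _ ≤ |G x - F δ x| + |F δ x| := hT.abs_add' _ _
      _ ≤ v δ * nrm T sqrt x + Classical.choose (hF δ).2 * nrm T sqrt x := by
            refine hT.add4 ?_ (hk.2.2 x hx)
            rw [abs_sub_comm']
            exact hGb x hx δ le_rfl δ le_rfl
      _ = (v δ + Classical.choose (hF δ).2) * nrm T sqrt x := by ring
  -- convergence
  have hGdiff : ∀ b : ι, MemEhat T L1 sqrt (fun g => F b g - G g) :=
    fun b => memEhat_sub hT hsqrt (hF b) hGmem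
  have hNHle : ∀ a, δ ≤ a → ∀ b, a ≤ b → NH (fun g => F b g - G g) ≤ v a := by
    intro a ha b hb
    exact (hNH _ (hGdiff b)).1.1 ⟨hvrt a ha, hvpos a ha, fun x hx => hGb x hx a ha b hb⟩
  have hNHpos : ∀ b : ι, 0 ≤ NH (fun g => F b g - G g) := by
    intro b
    exact (hNH _ (hGdiff b)).1.2 fun k hk => hk.2.1
  have hne : ∀ a : ι, ({w : E | ∃ b : ι, a ≤ b ∧ w = NH (fun g => F b g - G g)}).Nonempty :=
    fun a => ⟨_, a, le_rfl, rfl⟩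
  have hbdd : ∀ a, δ ≤ a →
      BddAbove {w : E | ∃ b : ι, a ≤ b ∧ w = NH (fun g => F b g - G g)} := by
    intro a ha
    refine ⟨v a, ?_⟩
    rintro w ⟨b, hb, rfl⟩
    exact hNHle a ha b hb
  refine ⟨hGmem, fun a ha => isLUB_csSup (hne a) (hbdd a ha), ?_, ?_⟩
  · rintro w ⟨a, ha, rfl⟩
    exact le_trans (hNHpos a) (le_csSup (hbdd a ha) ⟨a, le_rfl, rfl⟩)
  · intro z hz
    refine hvglb z fun a ha => ?_
    have h1 : z ≤ sSup {w : E | ∃ b : ι, a ≤ b ∧ w = NH (fun g => F b g - G g)} :=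
      hz ⟨a, ha, rfl⟩
    refine le_trans h1 (csSup_le (hne a) ?_)
    rintro w ⟨b, hb, rfl⟩
    exact hNHle a ha b hb

end Stmt15

/-- The `T`-strong dual `Ê` of `E = L²(T)` is strongly complete:
every net `(F_α)` in `Ê` whose Cauchy moduli
`v_α = sup_{β,γ ≥ α} ‖F_β - F_γ‖` are eventually defined in `R(T)` and decrease
to `0` converges `T`-strongly to some `F ∈ Ê`. -/
theorem stmt15 (T : E → E) (L1 : Set E) (hT : IsCondExp T L1)
    (sqrt : E → E) (hsqrt : IsSqrt sqrt)
    -- `NH` is the `R(T)`-valued operator norm on `Ê`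
    (NH : (E → E) → E)
    (hNH : ∀ F : E → E, MemEhat T L1 sqrt F →
      IsGLB {k : E | k ∈ RT T ∧ 0 ≤ k ∧ ∀ x ∈ L2 L1, |F x| ≤ k * nrm T sqrt x} (NH F) ∧
      ∀ x ∈ L2 L1, |F x| ≤ NH F * nrm T sqrt x)
    -- a net in `Ê` indexed by the directed set `ι`
    {ι : Type*} [Nonempty ι] [Preorder ι] (hdir : ∀ a b : ι, ∃ c : ι, a ≤ c ∧ b ≤ c)
    (F : ι → E → E) (hF : ∀ a : ι, MemEhat T L1 sqrt (F a))
    -- which is a `T`-strong Cauchy net: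
    (δ : ι) (v : ι → E)
    (hv : ∀ a : ι, δ ≤ a →
      IsLUB {w : E | ∃ b c : ι, a ≤ b ∧ a ≤ c ∧ w = NH (fun g => F b g - F c g)} (v a))
    (hv0 : IsGLB {w : E | ∃ a : ι, δ ≤ a ∧ w = v a} 0) :
    -- it converges `T`-strongly to some member of `Ê`:
    ∃ G : E → E, MemEhat T L1 sqrt G ∧ ∃ (δ' : ι) (u : ι → E),
      (∀ a : ι, δ' ≤ a →
        IsLUB {w : E | ∃ b : ι, a ≤ b ∧ w = NH (fun g => F b g - G g)} (u a)) ∧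
      IsGLB {w : E | ∃ a : ι, δ' ≤ a ∧ w = u a} 0 := by
  classical
  have hvpos : ∀ a, δ ≤ a → 0 ≤ v a := fun a ha => hv0.1 ⟨a, ha, rfl⟩
  have hvanti : ∀ a b : ι, δ ≤ a → a ≤ b → v b ≤ v a := by
    intro a b ha hab
    refine (hv b (le_trans ha hab)).2 ?_
    rintro w ⟨b', c', hb', hc', rfl⟩
    exact (hv a ha).1 ⟨b', c', le_trans hab hb', le_trans hab hc', rfl⟩
  have hvglb : ∀ z : E, (∀ a, δ ≤ a → z ≤ v a) → z ≤ 0 := by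
    intro z hz
    refine hv0.2 ?_
    rintro w ⟨a, ha, rfl⟩
    exact hz a ha
  have hdiffE : ∀ b c : ι, MemEhat T L1 sqrt (fun g => F b g - F c g) :=
    fun b c => Stmt15.memEhat_sub hT hsqrt (hF b) (hF c)
  have hNHrt : ∀ H : E → E, MemEhat T L1 sqrt H → NH H ∈ RT T := by
    intro H hH
    exact hT.rt_glb (fun k hk => hk.1) (hNH H hH).1
  have hvrt : ∀ a, δ ≤ a → v a ∈ RT T := by
    intro a ha
    refine hT.rt_lub ?_ (hv a ha)
    rintro w ⟨b, c, hb, hc, rfl⟩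
    exact hNHrt _ (hdiffE b c)
  have hcb : ∀ a, δ ≤ a → ∀ b c, a ≤ b → a ≤ c → ∀ x, x ∈ L2 L1 →
      |F b x - F c x| ≤ v a * nrm T sqrt x := by
    intro a ha b c hb hc x hx
    have h1 : NH (fun g => F b g - F c g) ≤ v a := (hv a ha).1 ⟨b, c, hb, hc, rfl⟩
    have h2 := (hNH _ (hdiffE b c)).2 x hx
    calc |F b x - F c x| ≤ NH (fun g => F b g - F c g) * nrm T sqrt x := h2
    _ ≤ v a * nrm T sqrt x := hT.mulR h1 (Stmt15.nrm_nonneg hT hsqrt x)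
  -- the limit functional
  set G : E → E := fun x =>
    sInf {z : E | ∃ a, δ ≤ a ∧ z = sSup {w : E | ∃ b, a ≤ b ∧ w = F b x}} with hGdef
  have hGlim : ∀ x : E, ∀ K : E, 0 ≤ K →
      (∀ a, δ ≤ a → ∀ b c, a ≤ b → a ≤ c → |F b x - F c x| ≤ v a * K) →
      ∀ a, δ ≤ a → ∀ b, a ≤ b → |F b x - G x| ≤ v a * K := by
    intro x K hK hC
    exact (Stmt15.lim_bound hT hdir δ v hvpos hvanti (fun b => F b x) K hK hC).2.2
  have hGrt : ∀ x, x ∈ L2 L1 → G x ∈ RT T := by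
    intro x hx
    have lb := Stmt15.lim_bound hT hdir δ v hvpos hvanti (fun b => F b x)
      (nrm T sqrt x) (Stmt15.nrm_nonneg hT hsqrt x)
      (fun a ha b c hb hc => hcb a ha b c hb hc x hx)
    refine hT.rt_glb ?_ lb.2.1
    rintro z ⟨a, ha, rfl⟩
    refine hT.rt_lub ?_ (lb.1 a ha)
    rintro w ⟨b, hb, rfl⟩
    exact (hF b).1.1 x hx
  obtain ⟨h1, h2, h3⟩ := Stmt15.build hT hsqrt NH hNH hdir F hF δ v hvpos hvanti hvrt
    hvglb hcb G hGlim hGrt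
  exact ⟨G, h1, δ,
    fun a => sSup {w : E | ∃ b : ι, a ≤ b ∧ w = NH (fun g => F b g - G g)}, h2, h3⟩
end

section
/- Let E = L^2(T), 𝔣, 𝔤 ∈ E*, α ∈ R(T)_+ and x ∈ E_+. Then the Riesz–Kantorovich supremum satisfies (𝔣 ∨ 𝔤)(αx) = α·(𝔣 ∨ 𝔤)(x), where the key step uses the canonical partial inverse β of α in the universally complete f-algebra R(T) (with αβ = P_α e) to transform decompositions y + z = αx into decompositions of P_α x. -/
/-!
Common setup.  `E` models the universal completion `E_u` of the `T`-universally
complete Riesz space `L¹(T)`: a Dedekind complete (conditionally complete)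
`f`-algebra whose multiplicative unit `1 = e = Te` is a weak order unit.
`T : E → E` models the strictly positive conditional expectation operator,
`L1 ⊆ E` its natural domain `L¹(T)`, `L2 L1` the space `L²(T)` and `RT T` the
range `R(T)` of `T`.
-/

variable {E : Type*}

variable [CommRing E] [ConditionallyCompleteLattice E]

/-!
Writing `P = α β` and `Q = 1 - P`, the Archimedean property of the Dedekind complete space
together with `e = 1` being a weak order unit gives `Q ⊥ α`, and the `f`-algebra property then
gives `α Q = 0`. Hence `α β y = y` for every `0 ≤ y ≤ α x`, so a decomposition `y + z = α x`
pulls back to the decomposition `(β y + Q x) + β z = x`, while a decomposition `y + z = x`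
pushes forward to `α y + α z = α x`; comparing the two Riesz–Kantorovich sets gives the claim.
-/

namespace FAlgebra

variable {A : Type*} [CommRing A] [Lattice A] [IsOrderedAddMonoid A]

theorem mul_self_nonneg (hmul : ∀ a b : A, 0 ≤ a → 0 ≤ b → 0 ≤ a * b)
    (hf : ∀ a b c : A, a ⊓ b = 0 → 0 ≤ c → (c * a) ⊓ b = 0) (a : A) : 0 ≤ a * a := by
  have hpm : a⁺ * a⁻ = 0 := by
    have h₁ : (a⁺ * a⁻) ⊓ a⁺ = 0 :=
      hf _ _ _ (by rw [inf_comm, posPart_inf_negPart_eq_zero]) (posPart_nonneg a)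
    have h₂ := hf _ _ _ (by rwa [inf_comm]) (negPart_nonneg a)
    rwa [mul_comm, inf_idem] at h₂
  have hsq : a * a = a⁺ * a⁺ + a⁻ * a⁻ := by
    conv_lhs => rw [← posPart_sub_negPart a]
    linear_combination (-2 : A) * hpm
  rw [hsq]
  exact add_nonneg (hmul _ _ (posPart_nonneg a) (posPart_nonneg a))
    (hmul _ _ (negPart_nonneg a) (negPart_nonneg a))

theorem isOrderedRing (hmul : ∀ a b : A, 0 ≤ a → 0 ≤ b → 0 ≤ a * b)
    (hf : ∀ a b c : A, a ⊓ b = 0 → 0 ≤ c → (c * a) ⊓ b = 0) : IsOrderedRing A :=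
  have : ZeroLEOneClass A := ⟨by simpa using mul_self_nonneg hmul hf 1⟩
  IsOrderedRing.of_mul_nonneg hmul

end FAlgebra

theorem mem_L2_of_nonneg_of_le {A : Type*} [Ring A] [Lattice A] [IsOrderedRing A]
    {L1 : Set A} (hsol : ∀ a ∈ L1, ∀ b : A, |b| ≤ |a| → b ∈ L1) {a b : A} (ha : 0 ≤ a)
    (hab : a ≤ b) (hb : b ∈ L2 L1) : a ∈ L2 L1 :=
  have hb0 : 0 ≤ b := ha.trans hab
  ⟨hsol b hb.1 a (by rwa [abs_of_nonneg ha, abs_of_nonneg hb0]),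
    hsol _ hb.2 _ (by
      rw [abs_of_nonneg (mul_nonneg ha ha), abs_of_nonneg (mul_nonneg hb0 hb0)]
      exact mul_self_le_mul_self ha hab)⟩

theorem nonpos_of_forall_nsmul_le {A : Type*} [AddCommGroup A] [ConditionallyCompleteLattice A]
    [IsOrderedAddMonoid A] {b c : A} (h : ∀ n : ℕ, n • c ≤ b) : c ≤ 0 := by
  have hbdd : BddAbove (Set.range fun n : ℕ => n • c) := ⟨b, by rintro _ ⟨n, rfl⟩; exact h n⟩
  have hs : (⨆ n : ℕ, n • c) ≤ (⨆ n : ℕ, n • c) - c :=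
    ciSup_le fun n => le_sub_iff_add_le.mpr (by simpa only [succ_nsmul] using le_ciSup hbdd (n + 1))
  simpa using hs

/-- `⨆ n, n α ⊓ 1` is the band projection of the unit onto the band generated by `α`. -/
theorem mul_one_sub_iSup_nsmul_inf_one {A : Type*} [CommRing A] [ConditionallyCompleteLattice A]
    [IsOrderedRing A] (hf : ∀ a b c : A, a ⊓ b = 0 → 0 ≤ c → (c * a) ⊓ b = 0)
    (hunit : ∀ x : A, 0 ≤ x → x ⊓ 1 = 0 → x = 0) {α : A} (hα : 0 ≤ α) :
    α * (1 - ⨆ n : ℕ, n • α ⊓ 1) = 0 := by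
  set P := ⨆ n : ℕ, n • α ⊓ 1
  have hbdd : BddAbove (Set.range fun n : ℕ => n • α ⊓ 1) := ⟨1, by rintro _ ⟨n, rfl⟩; simp⟩
  have hQ : 0 ≤ 1 - P := sub_nonneg.mpr (ciSup_le fun n => inf_le_right)
  have hdisj : (1 - P) ⊓ α = 0 := by
    refine hunit _ (le_inf hQ hα) (le_antisymm ?_ (le_inf (le_inf hQ hα) zero_le_one))
    set c := (1 - P) ⊓ α ⊓ 1
    -- `n c ≤ n α ⊓ 1 ≤ P` and `c ≤ 1 - P`, so `n c` stays below `1` by induction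
    refine nonpos_of_forall_nsmul_le (b := 1) fun n => ?_
    induction n with
    | zero => simp
    | succ n ih =>
      have hnP : n • c ≤ P :=
        (le_inf (nsmul_le_nsmul_right (inf_le_left.trans inf_le_right) n) ih).trans
          (le_ciSup hbdd n)
      calc (n + 1) • c = n • c + c := succ_nsmul c n
        _ ≤ P + (1 - P) := add_le_add hnP (inf_le_left.trans inf_le_left)
        _ = 1 := by ring
  have hP : 0 ≤ P := by simpa [P] using le_ciSup hbdd 0
  have hle : α * (1 - P) ≤ α := by simpa using mul_le_mul_of_nonneg_left (sub_le_self 1 hP) hα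
  simpa [inf_eq_left.mpr hle] using hf _ _ _ hdisj hα

section RieszKantorovich

variable [IsOrderedRing E] {L1 : Set E} {F G : E → E} {α β x v : E}

theorem add_zero_mem_RKset (hsol : ∀ a ∈ L1, ∀ b : E, |b| ≤ |a| → b ∈ L1)
    (hx : x ∈ L2 L1) (hx0 : 0 ≤ x) : F x + G 0 ∈ RKset L1 F G x :=
  ⟨x, 0, hx, mem_L2_of_nonneg_of_le hsol le_rfl hx0 hx, hx0, le_rfl, add_zero x, rfl⟩

theorem mul_mem_RKset (hα : 0 ≤ α) (hαL2 : ∀ y ∈ L2 L1, α * y ∈ L2 L1)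
    (hF : ∀ y ∈ L2 L1, F (α * y) = α * F y) (hG : ∀ y ∈ L2 L1, G (α * y) = α * G y) {w : E}
    (hw : w ∈ RKset L1 F G x) : α * w ∈ RKset L1 F G (α * x) := by
  obtain ⟨y, z, hy, hz, hy0, hz0, rfl, rfl⟩ := hw
  exact ⟨α * y, α * z, hαL2 y hy, hαL2 z hz, mul_nonneg hα hy0, mul_nonneg hα hz0,
    (mul_add α y z).symm, by rw [hF y hy, hG z hz, mul_add]⟩

theorem mul_mem_upperBounds_RKset (hsol : ∀ a ∈ L1, ∀ b : E, |b| ≤ |a| → b ∈ L1)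
    (hα : 0 ≤ α) (hβ : 0 ≤ β) (hP : α * β ≤ 1) (hαQ : α * (1 - α * β) = 0)
    (hF : ∀ y ∈ L2 L1, F (α * y) = α * F y) (hG : ∀ y ∈ L2 L1, G (α * y) = α * G y)
    (hx : x ∈ L2 L1) (hx0 : 0 ≤ x) (hv : v ∈ upperBounds (RKset L1 F G x)) :
    α * v ∈ upperBounds (RKset L1 F G (α * x)) := by
  rintro _ ⟨y, z, hy, hz, hy0, hz0, hyz, rfl⟩
  have hQ : 0 ≤ 1 - α * β := sub_nonneg.mpr hP
  have hQ_ann : ∀ u, 0 ≤ u → u ≤ α * x → (1 - α * β) * u = 0 := fun u hu hux =>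
    le_antisymm ((mul_le_mul_of_nonneg_left hux hQ).trans_eq (by linear_combination x * hαQ))
      (mul_nonneg hQ hu)
  have hQy := hQ_ann y hy0 (hyz ▸ le_add_of_nonneg_right hz0)
  have hQz := hQ_ann z hz0 (hyz ▸ le_add_of_nonneg_left hy0)
  set y' := β * y + (1 - α * β) * x with hy'
  set z' := β * z with hz'
  have hsum : y' + z' = x := by rw [hy', hz']; linear_combination β * hyz
  have hy'0 : 0 ≤ y' := add_nonneg (mul_nonneg hβ hy0) (mul_nonneg hQ hx0)
  have hz'0 : 0 ≤ z' := mul_nonneg hβ hz0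
  have hy'L2 := mem_L2_of_nonneg_of_le hsol hy'0 (hsum ▸ le_add_of_nonneg_right hz'0) hx
  have hz'L2 := mem_L2_of_nonneg_of_le hsol hz'0 (hsum ▸ le_add_of_nonneg_left hy'0) hx
  have hmem : F y' + G z' ∈ RKset L1 F G x :=
    ⟨y', z', hy'L2, hz'L2, hy'0, hz'0, hsum, rfl⟩
  have hαy' : α * y' = y := by rw [hy']; linear_combination x * hαQ - hQy
  have hαz' : α * z' = z := by rw [hz']; linear_combination -hQz
  calc F y + G z = α * (F y' + G z') := by rw [mul_add, ← hF _ hy'L2, ← hG _ hz'L2, hαy', hαz']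
    _ ≤ α * v := mul_le_mul_of_nonneg_left (hv hmem) hα

theorem mul_le_of_mem_upperBounds_RKset (hsol : ∀ a ∈ L1, ∀ b : E, |b| ≤ |a| → b ∈ L1)
    (hα : 0 ≤ α) (hβ : 0 ≤ β) (hP : α * β ≤ 1) (hαQ : α * (1 - α * β) = 0)
    (hαL2 : ∀ y ∈ L2 L1, α * y ∈ L2 L1)
    (hF : ∀ y ∈ L2 L1, F (α * y) = α * F y) (hG : ∀ y ∈ L2 L1, G (α * y) = α * G y)
    (hx : x ∈ L2 L1) (hx0 : 0 ≤ x) (hv : IsLUB (RKset L1 F G x) v) {b : E}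
    (hb : b ∈ upperBounds (RKset L1 F G (α * x))) : α * v ≤ b := by
  have hQ : 0 ≤ 1 - α * β := sub_nonneg.mpr hP
  have hscaled : ∀ w ∈ RKset L1 F G x, α * w ≤ b := fun w hw =>
    hb (mul_mem_RKset hα hαL2 hF hG hw)
  have hv' : v ≤ β * b + (1 - α * β) * v := hv.2 fun w hw =>
    calc w = β * (α * w) + (1 - α * β) * w := by ring
      _ ≤ β * b + (1 - α * β) * v := add_le_add (mul_le_mul_of_nonneg_left (hscaled w hw) hβ)
          (mul_le_mul_of_nonneg_left (hv.1 hw) hQ)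
  have hQb : 0 ≤ (1 - α * β) * b := by
    have hw := add_zero_mem_RKset (F := F) (G := G) hsol hx hx0
    calc 0 = (1 - α * β) * (α * (F x + G 0)) := by linear_combination -(F x + G 0) * hαQ
      _ ≤ (1 - α * β) * b := mul_le_mul_of_nonneg_left (hscaled _ hw) hQ
  calc α * v ≤ α * (β * b + (1 - α * β) * v) := mul_le_mul_of_nonneg_left hv' hα
    _ = b - (1 - α * β) * b := by linear_combination v * hαQ
    _ ≤ b := sub_le_self b hQb

end RieszKantorovich

theorem stmt19_general (T : E → E) (L1 : Set E) (hT : IsCondExp T L1)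
    (F G : E → E) (hF : TLinear T L1 F) (hG : TLinear T L1 G)
    (α : E) (hα : α ∈ RT T) (hα0 : 0 ≤ α)
    -- `β` is the canonical partial inverse of `α` in `R(T)`:
    (β : E) (hβ0 : 0 ≤ β)
    (hβinv : α * β = ⨆ n : ℕ, ((n • α) ⊓ 1))
    (x : E) (hx : x ∈ L2 L1) (hx0 : 0 ≤ x)
    (v : E) (hv : IsLUB (RKset L1 F G x) v) :
    IsLUB (RKset L1 F G (α * x)) (α * v) := by
  have : IsOrderedAddMonoid E := { add_le_add_left := fun a b h c => hT.addLe a b c h }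
  have : IsOrderedRing E := FAlgebra.isOrderedRing hT.mulPos hT.fAlg
  have hP : α * β ≤ 1 := hβinv ▸ ciSup_le fun n => inf_le_right
  have hαQ : α * (1 - α * β) = 0 := by
    rw [hβinv]; exact mul_one_sub_iSup_nsmul_inf_one hT.fAlg hT.weakUnit hα0
  have hFα := hF.2.2.1 α hα
  have hGα := hG.2.2.1 α hα
  exact ⟨mul_mem_upperBounds_RKset hT.l1sol hα0 hβ0 hP hαQ hFα hGα hx hx0 hv.1,
    fun b hb => mul_le_of_mem_upperBounds_RKset hT.l1sol hα0 hβ0 hP hαQ (hT.l2mod α hα)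
      hFα hGα hx hx0 hv hb⟩

/-- For `F, G ∈ E*`, `α ∈ R(T)₊` and `x ∈ E₊`, the
Riesz–Kantorovich supremum is `R(T)₊`-homogeneous:
`(F ∨ G)(αx) = α (F ∨ G)(x)`.  The key step uses the canonical partial inverse
`β` of `α` in the universally complete `f`-algebra `R(T)`, with
`α β = P_α e = sup_n (n α ⊓ e)`. -/
theorem stmt19 (T : E → E) (L1 : Set E) (hT : IsCondExp T L1)
    (F G : E → E) (hF : TLinear T L1 F) (hG : TLinear T L1 G)
    (α : E) (hα : α ∈ RT T) (hα0 : 0 ≤ α)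
    -- `β` is the canonical partial inverse of `α` in `R(T)`:
    (β : E) (hβ : β ∈ RT T) (hβ0 : 0 ≤ β)
    (hβinv : α * β = ⨆ n : ℕ, ((n • α) ⊓ 1))
    (x : E) (hx : x ∈ L2 L1) (hx0 : 0 ≤ x)
    (v : E) (hv : IsLUB (RKset L1 F G x) v) :
    IsLUB (RKset L1 F G (α * x)) (α * v) :=
  stmt19_general T L1 hT F G hF hG α hα hα0 β hβ0 hβinv x hx hx0 v hv
end
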